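/- arXiv:2509.00383 — 3 statements merged into one kernel-verified Lean document; each statement's English description precedes it below -/
import Mathlib

section
/- For any connected graph G, the monitoring edge-geodetic number of G is at most 3·c(G) + ℓ(G) + 1. If G contains a cut-vertex, then it is at most 3·c(G) + ℓ(G). -/
open SimpleGraph

variable {V : Type*}

/-- `B_r(u)`: the set of edges `uv` with `dist(u,r) = dist(v,r) + 1`. -/
def brSet (G : SimpleGraph V) (r u : V) : Set (Sym2 V) :=
  {e | ∃ v : V, e = s(u, v) ∧ G.Adj u v ∧ G.dist u r = G.dist v r + 1}

/-- `F` is a good edge set with respect to the root `r`: it contains all horizontal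
edges and, for every `u ≠ r`, exactly `|B_r(u)| - 1` edges of `B_r(u)`. -/
def IsGoodEdgeSet (G : SimpleGraph V) (r : V) (F : Set (Sym2 V)) : Prop :=
  F ⊆ G.edgeSet ∧
  (∀ u v : V, G.Adj u v → G.dist u r = G.dist v r → s(u, v) ∈ F) ∧
  (∀ u : V, u ≠ r → (brSet G r u ∩ F).ncard = (brSet G r u).ncard - 1)

/-- Cyclomatic number `m - n + 1` of a connected graph (written `m + 1 - n`
to be correct in `ℕ`). -/
noncomputable def cyclomatic [Fintype V] (G : SimpleGraph V) : ℕ :=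
  G.edgeSet.ncard + 1 - Fintype.card V

/-- Number of leaves (degree-1 vertices). -/
noncomputable def numLeaves (G : SimpleGraph V) : ℕ :=
  {v : V | (G.neighborSet v).ncard = 1}.ncard

/-- Distance from a vertex to an edge: minimum over the two endpoints. -/
noncomputable def edgeDist (G : SimpleGraph V) (v : V) : Sym2 V → ℕ :=
  Sym2.lift ⟨fun a b => min (G.dist v a) (G.dist v b), fun a b => min_comm _ _⟩

def IsResolving (G : SimpleGraph V) (S : Set V) : Prop :=
  ∀ x y : V, x ≠ y → ∃ s ∈ S, G.dist s x ≠ G.dist s y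

def IsEdgeResolving (G : SimpleGraph V) (S : Set V) : Prop :=
  ∀ e ∈ G.edgeSet, ∀ f ∈ G.edgeSet, e ≠ f → ∃ s ∈ S, edgeDist G s e ≠ edgeDist G s f

/-- Distance from a vertex to a mixed element (vertex or edge). -/
noncomputable def mixedDist (G : SimpleGraph V) (s : V) : V ⊕ Sym2 V → ℕ
  | Sum.inl v => G.dist s v
  | Sum.inr e => edgeDist G s e

/-- Membership in `V(G) ∪ E(G)`. -/
def IsMixedElem (G : SimpleGraph V) : V ⊕ Sym2 V → Prop
  | Sum.inl _ => True
  | Sum.inr e => e ∈ G.edgeSet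

def IsMixedResolving (G : SimpleGraph V) (S : Set V) : Prop :=
  ∀ x y : V ⊕ Sym2 V, IsMixedElem G x → IsMixedElem G y → x ≠ y →
    ∃ s ∈ S, mixedDist G s x ≠ mixedDist G s y

noncomputable def metricDim (G : SimpleGraph V) : ℕ :=
  sInf {k | ∃ S : Set V, IsResolving G S ∧ S.ncard = k}

noncomputable def edgeMetricDim (G : SimpleGraph V) : ℕ :=
  sInf {k | ∃ S : Set V, IsEdgeResolving G S ∧ S.ncard = k}

noncomputable def mixedMetricDim (G : SimpleGraph V) : ℕ :=
  sInf {k | ∃ S : Set V, IsMixedResolving G S ∧ S.ncard = k}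

/-- `v` is a cut-vertex: removing it disconnects the graph. -/
def IsCutVertex (G : SimpleGraph V) (v : V) : Prop :=
  ¬ (G.induce {u : V | u ≠ v}).Connected

/-- The set of endpoints of a set of edges. -/
def endpoints (F : Set (Sym2 V)) : Set V := {v | ∃ e ∈ F, v ∈ e}

def IsGeodetic (G : SimpleGraph V) (S : Set V) : Prop :=
  ∀ v : V, ∃ x ∈ S, ∃ y ∈ S, ∃ p : G.Walk x y,
    p.IsPath ∧ p.length = G.dist x y ∧ v ∈ p.support

noncomputable def geodeticNumber (G : SimpleGraph V) : ℕ :=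
  sInf {k | ∃ S : Set V, IsGeodetic G S ∧ S.ncard = k}

/-- Monitoring edge-geodetic set: every edge lies on all shortest paths between
some two vertices of `S`. -/
def IsMEG (G : SimpleGraph V) (S : Set V) : Prop :=
  ∀ e ∈ G.edgeSet, ∃ x ∈ S, ∃ y ∈ S,
    ∀ p : G.Walk x y, p.length = G.dist x y → e ∈ p.edges

noncomputable def megNumber (G : SimpleGraph V) : ℕ :=
  sInf {k | ∃ S : Set V, IsMEG G S ∧ S.ncard = k}

/-- Distance-edge-monitoring set. -/
def IsDEM (G : SimpleGraph V) (S : Set V) : Prop :=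
  ∀ e ∈ G.edgeSet, ∃ x ∈ S, ∃ y : V,
    ∀ p : G.Walk x y, p.length = G.dist x y → e ∈ p.edges

noncomputable def demNumber (G : SimpleGraph V) : ℕ :=
  sInf {k | ∃ S : Set V, IsDEM G S ∧ S.ncard = k}


namespace MEG13

variable {V : Type*}

open Classical in
/-- Parent of `u` w.r.t. root `r`: an arbitrary neighbor closer to `r`. -/
noncomputable def par (G : SimpleGraph V) (r u : V) : V :=
  if h : ∃ w, G.Adj u w ∧ G.dist u r = G.dist w r + 1 then h.choose else u

lemma dist_adj_le {G : SimpleGraph V} (hG : G.Connected) {u w : V} (h : G.Adj u w) (r : V) :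
    G.dist u r ≤ G.dist w r + 1 := by
  have h1 : G.dist u r ≤ G.dist u w + G.dist w r := hG.dist_triangle
  have h2 : G.dist u w ≤ 1 := by
    simpa using SimpleGraph.dist_le (SimpleGraph.Walk.cons h SimpleGraph.Walk.nil)
  omega

lemma par_spec {G : SimpleGraph V} (hG : G.Connected) {r u : V} (hu : u ≠ r) :
    G.Adj u (par G r u) ∧ G.dist u r = G.dist (par G r u) r + 1 := by
  obtain ⟨p, hp⟩ := hG.exists_walk_length_eq_dist u r
  have hex : ∃ w, G.Adj u w ∧ G.dist u r = G.dist w r + 1 := by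
    cases p with
    | nil => exact absurd rfl hu
    | @cons _ w _ h q =>
      refine ⟨w, h, ?_⟩
      have h1 : G.dist w r ≤ q.length := SimpleGraph.dist_le q
      have h2 : G.dist u r ≤ G.dist w r + 1 := dist_adj_le hG h r
      simp only [SimpleGraph.Walk.length_cons] at hp
      omega
  rw [par, dif_pos hex]
  exact hex.choose_spec

lemma dist_lt_card [Fintype V] {G : SimpleGraph V} (hG : G.Connected) (u r : V) :
    G.dist u r < Fintype.card V := by
  classical
  obtain ⟨p, hp⟩ := hG.exists_walk_length_eq_dist u r
  have h1 : G.dist u r ≤ p.bypass.length := SimpleGraph.dist_le _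
  have h2 := SimpleGraph.Walk.IsPath.length_lt p.bypass_isPath
  omega

/-- `Forced G r a x` : every geodesic from `x` to `r` is forced to go through `a`
(via a chain of unique up-neighbors). -/
inductive Forced (G : SimpleGraph V) (r : V) : V → V → Prop
  | refl (a : V) : Forced G r a a
  | step (a x : V) (hx : x ≠ r)
      (huniq : ∀ w, G.Adj x w → G.dist x r = G.dist w r + 1 → w = par G r x)
      (h : Forced G r a (par G r x)) : Forced G r a x

lemma Forced.trans {G : SimpleGraph V} {r : V} :
    ∀ {b x : V}, Forced G r b x → ∀ {a : V}, Forced G r a b → Forced G r a x := by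
  intro b x h2
  induction h2 with
  | refl => exact fun h1 => h1
  | step _ hx huniq _ ih => exact fun h1 => Forced.step _ _ hx huniq (ih h1)

lemma Forced.dist_le' {G : SimpleGraph V} (hG : G.Connected) {r a x : V}
    (h : Forced G r a x) : G.dist a r ≤ G.dist x r := by
  induction h with
  | refl => exact le_rfl
  | step _ hx _ _ ih =>
    have := (par_spec hG hx).2
    omega

lemma key {G : SimpleGraph V} (hG : G.Connected) {a : V} :
    ∀ {x r : V} (p : G.Walk x r), a ≠ r →
      (∀ w, G.Adj a w → G.dist a r = G.dist w r + 1 → w = par G r a) →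
      Forced G r a x → p.length = G.dist x r →
      s(a, par G r a) ∈ p.edges := by
  intro x r p
  induction p with
  | nil =>
    intro ha hau hf _
    cases hf with
    | refl => exact absurd rfl ha
    | step _ hx _ _ => exact absurd rfl hx
  | @cons u w y h q ih =>
    intro ha hau hf hl
    rw [SimpleGraph.Walk.length_cons] at hl
    have hqd : G.dist w y ≤ q.length := SimpleGraph.dist_le q
    have hup : G.dist u y ≤ G.dist w y + 1 := dist_adj_le hG h y
    have hqe : q.length = G.dist w y := by omega
    have hdu : G.dist u y = G.dist w y + 1 := by omega
    cases hf with
    | refl =>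
      have hw : w = par G y a := hau w h hdu
      subst hw
      rw [SimpleGraph.Walk.edges_cons]
      exact List.mem_cons_self
    | step _ hx huniq hpar =>
      have hw : w = par G y u := huniq w h hdu
      rw [SimpleGraph.Walk.edges_cons]
      exact List.mem_cons_of_mem _ (ih ha hau (hw ▸ hpar) hqe)


section Fin

variable [DecidableEq V]

/-- The parent edges (a spanning-tree-like structure rooted at `r`). -/
noncomputable def pedges [Fintype V] (G : SimpleGraph V) (r : V) : Finset (Sym2 V) :=
  (Finset.univ.erase r).image (fun u => s(u, par G r u))

/-- Finset of edges of `G`. -/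
noncomputable def edgeFin [Fintype V] (G : SimpleGraph V) : Finset (Sym2 V) :=
  Set.Finite.toFinset (G.edgeSet.toFinite)

lemma mem_edgeFin [Fintype V] {G : SimpleGraph V} {e : Sym2 V} :
    e ∈ edgeFin G ↔ e ∈ G.edgeSet := Set.Finite.mem_toFinset _

/-- Non-tree edges. -/
noncomputable def fedges [Fintype V] (G : SimpleGraph V) (r : V) : Finset (Sym2 V) :=
  edgeFin G \ pedges G r

/-- The (at most three) chosen vertices for a non-tree edge. -/
noncomputable def tset (G : SimpleGraph V) (r : V) : Sym2 V → Finset V :=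
  Sym2.lift ⟨fun u v => {u, v} ∪ (if G.dist u r = G.dist v r + 1 then {par G r u}
      else if G.dist v r = G.dist u r + 1 then {par G r v} else ∅),
    by
      intro u v
      dsimp only
      by_cases h1 : G.dist u r = G.dist v r + 1
      · have h2 : ¬ G.dist v r = G.dist u r + 1 := by omega
        rw [if_pos h1, if_neg h2, if_pos h1, Finset.pair_comm]
      · by_cases h2 : G.dist v r = G.dist u r + 1
        · rw [if_neg h1, if_pos h2, if_pos h2, Finset.pair_comm]
        · rw [if_neg h1, if_neg h2, if_neg h1, if_neg h2, Finset.pair_comm]⟩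

lemma tset_mk (G : SimpleGraph V) (r u v : V) :
    tset G r s(u, v) = {u, v} ∪ (if G.dist u r = G.dist v r + 1 then {par G r u}
      else if G.dist v r = G.dist u r + 1 then {par G r v} else ∅) := rfl

/-- Leaves of `G`, as a finset. -/
noncomputable def leafFin [Fintype V] (G : SimpleGraph V) : Finset V :=
  Finset.univ.filter (fun v => (G.neighborSet v).ncard = 1)

/-- The monitoring set (without the root). -/
noncomputable def S2 [Fintype V] (G : SimpleGraph V) (r : V) : Finset V :=
  leafFin G ∪ (fedges G r).biUnion (tset G r)

lemma mem_tset_left (G : SimpleGraph V) (r u v : V) : u ∈ tset G r s(u, v) := by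
  rw [tset_mk]
  exact Finset.mem_union_left _ (by simp)

lemma mem_tset_right (G : SimpleGraph V) (r u v : V) : v ∈ tset G r s(u, v) := by
  rw [tset_mk]
  exact Finset.mem_union_left _ (by simp)

lemma par_mem_tset (G : SimpleGraph V) {r u v : V} (h : G.dist u r = G.dist v r + 1) :
    par G r u ∈ tset G r s(u, v) := by
  rw [tset_mk]
  apply Finset.mem_union_right
  rw [if_pos h]
  simp

lemma card_tset_le (G : SimpleGraph V) (r : V) (e : Sym2 V) : (tset G r e).card ≤ 3 := by
  induction e using Sym2.ind with
  | _ u v =>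
    rw [tset_mk]
    refine le_trans (Finset.card_union_le _ _) ?_
    have h1 : ({u, v} : Finset V).card ≤ 2 :=
      le_trans (Finset.card_insert_le _ _) (by simp)
    have h2 : (if G.dist u r = G.dist v r + 1 then ({par G r u} : Finset V)
        else if G.dist v r = G.dist u r + 1 then {par G r v} else ∅).card ≤ 1 := by
      split
      · simp
      · split
        · simp
        · simp
    omega

lemma notin_pedges [Fintype V] {G : SimpleGraph V} (hG : G.Connected) {r u v : V}
    (hd : G.dist u r = G.dist v r) : s(u, v) ∉ pedges G r := by
  intro hmem
  rw [pedges, Finset.mem_image] at hmem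
  obtain ⟨x, hx, heq⟩ := hmem
  rw [Finset.mem_erase] at hx
  have hxs := par_spec hG hx.1
  rw [Sym2.eq_iff] at heq
  rcases heq with ⟨h1, h2⟩ | ⟨h1, h2⟩ <;> subst h1 <;> subst h2 <;> omega

lemma up_nonpar_mem_fedges [Fintype V] {G : SimpleGraph V} (hG : G.Connected) {r u v : V}
    (h : G.Adj u v) (hd : G.dist u r = G.dist v r + 1) (hnp : v ≠ par G r u) :
    s(u, v) ∈ fedges G r := by
  rw [fedges, Finset.mem_sdiff]
  refine ⟨mem_edgeFin.mpr h, ?_⟩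
  intro hmem
  rw [pedges, Finset.mem_image] at hmem
  obtain ⟨x, hx, heq⟩ := hmem
  rw [Finset.mem_erase] at hx
  have hxs := par_spec hG hx.1
  rw [Sym2.eq_iff] at heq
  rcases heq with ⟨h1, h2⟩ | ⟨h1, h2⟩
  · subst h1; exact hnp h2.symm
  · subst h1; subst h2; omega

lemma horiz_mem_fedges [Fintype V] {G : SimpleGraph V} (hG : G.Connected) {r u v : V}
    (h : G.Adj u v) (hd : G.dist u r = G.dist v r) :
    s(u, v) ∈ fedges G r := by
  rw [fedges, Finset.mem_sdiff]
  exact ⟨mem_edgeFin.mpr h, notin_pedges hG hd⟩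

lemma mem_S2_of_tset [Fintype V] {G : SimpleGraph V} {r : V} {e : Sym2 V} {x : V}
    (he : e ∈ fedges G r) (hx : x ∈ tset G r e) : x ∈ S2 G r := by
  rw [S2]
  exact Finset.mem_union_right _ (Finset.mem_biUnion.mpr ⟨e, he, hx⟩)

lemma leaf_mem_S2 [Fintype V] {G : SimpleGraph V} {r v : V}
    (h : (G.neighborSet v).ncard = 1) : v ∈ S2 G r := by
  rw [S2]
  exact Finset.mem_union_left _ (by rw [leafFin]; exact Finset.mem_filter.mpr ⟨Finset.mem_univ _, h⟩)


lemma exists_forced [Fintype V] {G : SimpleGraph V} (hG : G.Connected) (r : V) :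
    ∀ (k : ℕ) (a : V), a ≠ r → Fintype.card V - G.dist a r ≤ k →
      ∃ x ∈ S2 G r, Forced G r a x := by
  intro k
  induction k with
  | zero =>
    intro a ha hk
    have := dist_lt_card hG a r
    omega
  | succ k ih =>
    intro a ha hk
    by_cases hS : a ∈ S2 G r
    · exact ⟨a, hS, Forced.refl a⟩
    have has := par_spec hG ha
    have hda : 0 < G.dist a r := hG.pos_dist_of_ne ha
    -- a is not multi-up
    have hmulti : ∀ w, G.Adj a w → G.dist a r = G.dist w r + 1 → w = par G r a := by
      intro w hw hd
      by_contra hne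
      exact hS (mem_S2_of_tset (up_nonpar_mem_fedges hG hw hd hne) (mem_tset_left _ _ _ _))
    -- a has no horizontal edge
    have hhor : ∀ w, G.Adj a w → G.dist a r ≠ G.dist w r := by
      intro w hw hd
      exact hS (mem_S2_of_tset (horiz_mem_fedges hG hw hd) (mem_tset_left _ _ _ _))
    -- a is not a leaf
    have hleaf : (G.neighborSet a).ncard ≠ 1 := fun h => hS (leaf_mem_S2 h)
    -- a has a neighbor besides its parent
    have hchild : ∃ b, G.Adj a b ∧ b ≠ par G r a := by
      by_contra hcon
      push_neg at hcon
      apply hleaf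
      have : G.neighborSet a = {par G r a} := by
        ext w
        simp only [SimpleGraph.mem_neighborSet, Set.mem_singleton_iff]
        exact ⟨fun hw => hcon w hw, fun hw => hw ▸ has.1⟩
      rw [this, Set.ncard_singleton]
    obtain ⟨b, hab, hbp⟩ := hchild
    have h1 : G.dist a r ≤ G.dist b r + 1 := dist_adj_le hG hab r
    have h2 : G.dist b r ≤ G.dist a r + 1 := dist_adj_le hG hab.symm r
    have hdb : G.dist b r = G.dist a r + 1 := by
      rcases (by omega : G.dist b r = G.dist a r + 1 ∨ G.dist b r = G.dist a r ∨
          G.dist a r = G.dist b r + 1) with h | h | h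
      · exact h
      · exact absurd h.symm (hhor b hab)
      · exact absurd (hmulti b hab h) hbp
    have hbr : b ≠ r := by
      intro hbr
      rw [hbr, SimpleGraph.dist_self] at hdb
      omega
    -- the parent of b is a
    have hbpar : par G r b = a := by
      by_contra hne
      exact hS (mem_S2_of_tset
        (up_nonpar_mem_fedges hG hab.symm hdb (fun h => hne h.symm))
        (mem_tset_right _ _ _ _))
    -- b is single-up
    have hbuniq : ∀ w, G.Adj b w → G.dist b r = G.dist w r + 1 → w = par G r b := by
      intro w hw hd
      by_contra hne
      apply hS
      have : par G r b ∈ tset G r s(b, w) := par_mem_tset G hd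
      rw [hbpar] at this
      exact mem_S2_of_tset (up_nonpar_mem_fedges hG hw hd hne) this
    have hfab : Forced G r a b :=
      Forced.step a b hbr hbuniq (by rw [hbpar]; exact Forced.refl a)
    obtain ⟨x, hx, hfbx⟩ := ih b hbr (by have := dist_lt_card hG a r; omega)
    exact ⟨x, hx, Forced.trans hfbx hfab⟩


lemma pedges_subset [Fintype V] {G : SimpleGraph V} (hG : G.Connected) (r : V) :
    pedges G r ⊆ edgeFin G := by
  intro e he
  rw [pedges, Finset.mem_image] at he
  obtain ⟨x, hx, rfl⟩ := he
  rw [Finset.mem_erase] at hx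
  exact mem_edgeFin.mpr (par_spec hG hx.1).1

lemma card_pedges [Fintype V] {G : SimpleGraph V} (hG : G.Connected) (r : V) :
    (pedges G r).card = Fintype.card V - 1 := by
  rw [pedges, Finset.card_image_of_injOn, Finset.card_erase_of_mem (Finset.mem_univ r),
    Finset.card_univ]
  intro x hx y hy hxy
  simp only [Finset.coe_erase, Set.mem_diff, Finset.coe_univ, Set.mem_univ, true_and,
    Set.mem_singleton_iff] at hx hy
  have hxs := par_spec hG hx
  have hys := par_spec hG hy
  rw [Sym2.eq_iff] at hxy
  rcases hxy with ⟨h1, h2⟩ | ⟨h1, h2⟩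
  · exact h1
  · rw [h2] at hxs; rw [← h1] at hys; omega

lemma card_fedges [Fintype V] {G : SimpleGraph V} (hG : G.Connected) (r : V) :
    (fedges G r).card = cyclomatic G := by
  have hsub := pedges_subset hG r
  have hcard : (edgeFin G).card = G.edgeSet.ncard := by
    rw [edgeFin]
    exact (Set.ncard_eq_toFinset_card _ G.edgeSet.toFinite).symm
  have hn : 1 ≤ Fintype.card V := Fintype.card_pos_iff.mpr hG.nonempty
  have hle : (pedges G r).card ≤ (edgeFin G).card := Finset.card_le_card hsub
  rw [fedges, Finset.card_sdiff_of_subset hsub, card_pedges hG r, cyclomatic, ← hcard]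
  rw [card_pedges hG r] at hle
  omega

lemma card_leafFin [Fintype V] (G : SimpleGraph V) :
    (leafFin G).card = numLeaves G := by
  rw [numLeaves]
  have : {v : V | (G.neighborSet v).ncard = 1} = ↑(leafFin G) := by
    ext v
    rw [leafFin]
    simp
  rw [this, Set.ncard_coe_finset]

lemma card_S2_le [Fintype V] {G : SimpleGraph V} (hG : G.Connected) (r : V) :
    (S2 G r).card ≤ numLeaves G + 3 * cyclomatic G := by
  rw [S2]
  refine le_trans (Finset.card_union_le _ _) ?_
  have h1 : ((fedges G r).biUnion (tset G r)).card ≤ 3 * cyclomatic G := by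
    refine le_trans (Finset.card_biUnion_le) ?_
    refine le_trans (Finset.sum_le_card_nsmul _ _ 3 (fun e _ => card_tset_le G r e)) ?_
    rw [smul_eq_mul, card_fedges hG r, mul_comm]
  rw [card_leafFin]
  omega


lemma adj_monitor {G : SimpleGraph V} {u v : V} (h : G.Adj u v) :
    ∀ p : G.Walk u v, p.length = G.dist u v → s(u, v) ∈ p.edges := by
  intro p hp
  have hd : G.dist u v = 1 := SimpleGraph.dist_eq_one_iff_adj.mpr h
  rw [hd] at hp
  cases p with
  | nil => simp at hp
  | @cons _ w _ h' q =>
    cases q with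
    | nil => simp
    | cons h'' q' => simp [SimpleGraph.Walk.length_cons] at hp

/-- The main monitoring lemma, parameterized by how the "tree-edge" case is handled. -/
lemma isMEG_of [Fintype V] [DecidableEq V] {G : SimpleGraph V} (hG : G.Connected) (r : V)
    (Y : Set V) (hS : ↑(S2 G r) ⊆ Y)
    (hpair : ∀ (a : V), a ≠ r →
        (∀ w, G.Adj a w → G.dist a r = G.dist w r + 1 → w = par G r a) →
        ∀ x ∈ S2 G r, Forced G r a x →
        ∃ y ∈ Y, ∀ p : G.Walk x y, p.length = G.dist x y → s(a, par G r a) ∈ p.edges) :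
    IsMEG G Y := by
  have main : ∀ u v : V, G.Adj u v → G.dist v r ≤ G.dist u r →
      ∃ x ∈ Y, ∃ y ∈ Y, ∀ p : G.Walk x y, p.length = G.dist x y → s(u, v) ∈ p.edges := by
    intro u v huv hd
    have h1 : G.dist u r ≤ G.dist v r + 1 := dist_adj_le hG huv r
    rcases (by omega : G.dist u r = G.dist v r ∨ G.dist u r = G.dist v r + 1) with hd' | hd'
    · -- horizontal edge
      have he := horiz_mem_fedges hG huv hd'
      exact ⟨u, hS (mem_S2_of_tset he (mem_tset_left _ _ _ _)),
        v, hS (mem_S2_of_tset he (mem_tset_right _ _ _ _)), adj_monitor huv⟩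
    · by_cases hvp : v = par G r u
      · -- tree edge
        have hur : u ≠ r := by
          intro hur
          rw [hur, SimpleGraph.dist_self] at hd'
          omega
        by_cases hmu : ∀ w, G.Adj u w → G.dist u r = G.dist w r + 1 → w = par G r u
        · -- u single-up : use forced descent
          obtain ⟨x, hx, hf⟩ := exists_forced hG r (Fintype.card V) u hur (Nat.sub_le _ _)
          obtain ⟨y, hy, hmon⟩ := hpair u hur hmu x hx hf
          refine ⟨x, hS hx, y, hy, ?_⟩
          intro p hp
          rw [hvp]
          exact hmon p hp
        · -- u multi-up : both u and its parent are in S2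
          push_neg at hmu
          obtain ⟨w, haw, hdw, hwp⟩ := hmu
          have he := up_nonpar_mem_fedges hG haw hdw hwp
          have hu : u ∈ S2 G r := mem_S2_of_tset he (mem_tset_left _ _ _ _)
          have hp : par G r u ∈ S2 G r := mem_S2_of_tset he (par_mem_tset G hdw)
          refine ⟨u, hS hu, par G r u, hS hp, ?_⟩
          intro p hlen
          rw [hvp]
          exact adj_monitor (hvp ▸ huv) p hlen
      · -- non-tree up edge
        have he := up_nonpar_mem_fedges hG huv hd' hvp
        exact ⟨u, hS (mem_S2_of_tset he (mem_tset_left _ _ _ _)),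
          v, hS (mem_S2_of_tset he (mem_tset_right _ _ _ _)), adj_monitor huv⟩
  intro e he
  induction e using Sym2.ind with
  | _ u v =>
    have huv : G.Adj u v := he
    rcases le_total (G.dist v r) (G.dist u r) with hd | hd
    · exact main u v huv hd
    · obtain ⟨x, hx, y, hy, hmon⟩ := main v u huv.symm hd
      refine ⟨x, hx, y, hy, ?_⟩
      intro p hp
      rw [Sym2.eq_swap]
      exact hmon p hp


lemma comp_reach {G : SimpleGraph V} {r : V} :
    ∀ {x y : V} (p : G.Walk x y) (hx : x ≠ r) (hy : y ≠ r),
      (∀ z ∈ p.support, z ≠ r) →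
      (G.induce {u : V | u ≠ r}).Reachable ⟨x, hx⟩ ⟨y, hy⟩ := by
  intro x y p
  induction p with
  | nil => intro hx hy _; rfl
  | @cons u w y h q ih =>
    intro hx hy hsup
    have hw : w ≠ r := hsup w (by simp [SimpleGraph.Walk.support_cons,
      SimpleGraph.Walk.start_mem_support])
    refine SimpleGraph.Reachable.trans (SimpleGraph.Adj.reachable ?_)
      (ih hw hy fun z hz => hsup z (by simp [SimpleGraph.Walk.support_cons, hz]))
    show (G.induce _).Adj ⟨u, hx⟩ ⟨w, hw⟩
    simpa using h

lemma comp_has_S [Fintype V] [DecidableEq V] {G : SimpleGraph V} (hG : G.Connected) (r : V)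
    {u0 : V} (h0 : u0 ≠ r) :
    ∃ y, ∃ hy : y ≠ r, y ∈ S2 G r ∧
      (G.induce {u : V | u ≠ r}).Reachable ⟨u0, h0⟩ ⟨y, hy⟩ := by
  classical
  set H := G.induce {u : V | u ≠ r} with hH
  set C : Finset V := Finset.univ.filter
    (fun w => ∃ hw : w ≠ r, H.Reachable ⟨u0, h0⟩ ⟨w, hw⟩) with hC
  have hC0 : u0 ∈ C := by
    rw [hC, Finset.mem_filter]
    exact ⟨Finset.mem_univ _, h0, SimpleGraph.Reachable.refl _⟩
  obtain ⟨b, hbC, hbmax⟩ := C.exists_max_image (fun w => G.dist w r) ⟨u0, hC0⟩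
  rw [hC, Finset.mem_filter] at hbC
  obtain ⟨-, hbr, hbreach⟩ := hbC
  refine ⟨b, hbr, ?_, hbreach⟩
  by_cases hleaf : (G.neighborSet b).ncard = 1
  · exact leaf_mem_S2 hleaf
  have hbs := par_spec hG hbr
  have hdb : 0 < G.dist b r := hG.pos_dist_of_ne hbr
  -- every neighbor of b is at distance at most that of b
  have hnb : ∀ w, G.Adj b w → G.dist w r ≤ G.dist b r := by
    intro w hw
    by_cases hwr : w = r
    · rw [hwr, SimpleGraph.dist_self]; omega
    · refine hbmax w ?_
      rw [hC, Finset.mem_filter]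
      refine ⟨Finset.mem_univ _, hwr, hbreach.trans (SimpleGraph.Adj.reachable ?_)⟩
      show (G.induce _).Adj ⟨b, hbr⟩ ⟨w, hwr⟩
      simpa using hw
  have hchild : ∃ w, G.Adj b w ∧ w ≠ par G r b := by
    by_contra hcon
    push_neg at hcon
    apply hleaf
    have : G.neighborSet b = {par G r b} := by
      ext w
      simp only [SimpleGraph.mem_neighborSet, Set.mem_singleton_iff]
      exact ⟨fun hw => hcon w hw, fun hw => hw ▸ hbs.1⟩
    rw [this, Set.ncard_singleton]
  obtain ⟨w, hbw, hwp⟩ := hchild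
  have h1 : G.dist b r ≤ G.dist w r + 1 := dist_adj_le hG hbw r
  have h2 : G.dist w r ≤ G.dist b r := hnb w hbw
  rcases (by omega : G.dist b r = G.dist w r ∨ G.dist b r = G.dist w r + 1) with hd | hd
  · exact mem_S2_of_tset (horiz_mem_fedges hG hbw hd) (mem_tset_left _ _ _ _)
  · exact mem_S2_of_tset (up_nonpar_mem_fedges hG hbw hd hwp) (mem_tset_left _ _ _ _)

lemma cross_monitor [DecidableEq V] {G : SimpleGraph V} (hG : G.Connected) {r x y : V}
    (hx : x ≠ r) (hy : y ≠ r)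
    (hnreach : ¬ (G.induce {u : V | u ≠ r}).Reachable ⟨x, hx⟩ ⟨y, hy⟩)
    {a : V} (ha : a ≠ r)
    (hau : ∀ w, G.Adj a w → G.dist a r = G.dist w r + 1 → w = par G r a)
    (hf : Forced G r a x) :
    ∀ p : G.Walk x y, p.length = G.dist x y → s(a, par G r a) ∈ p.edges := by
  intro p hp
  have hr : r ∈ p.support := by
    by_contra hr
    exact hnreach (comp_reach p hx hy (fun z hz h => hr (h ▸ hz)))
  have hsplit := p.take_spec hr
  have hlen : (p.takeUntil r hr).length + (p.dropUntil r hr).length = p.length := by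
    have := congrArg SimpleGraph.Walk.length hsplit
    rwa [SimpleGraph.Walk.length_append] at this
  have h1 : G.dist x r ≤ (p.takeUntil r hr).length := SimpleGraph.dist_le _
  have h2 : G.dist r y ≤ (p.dropUntil r hr).length := SimpleGraph.dist_le _
  have h3 : G.dist x y ≤ G.dist x r + G.dist r y := hG.dist_triangle
  have hq : (p.takeUntil r hr).length = G.dist x r := by omega
  have hmem := key hG (p.takeUntil r hr) ha hau hf hq
  rw [← hsplit, SimpleGraph.Walk.edges_append]
  exact List.mem_append_left _ hmem


lemma megNumber_le_of_isMEG [Fintype V] {G : SimpleGraph V} (S : Finset V)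
    (h : IsMEG G ↑S) : megNumber G ≤ S.card := by
  apply Nat.sInf_le
  exact ⟨↑S, h, Set.ncard_coe_finset _⟩

lemma part1 [Fintype V] [DecidableEq V] {G : SimpleGraph V} (hG : G.Connected) (r : V) :
    megNumber G ≤ 3 * cyclomatic G + numLeaves G + 1 := by
  have hmeg : IsMEG G ↑(insert r (S2 G r)) := by
    refine isMEG_of hG r _ ?_ ?_
    · intro x hx
      simp only [Finset.coe_insert, Set.mem_insert_iff]
      exact Or.inr hx
    · intro a ha hau x hx hf
      refine ⟨r, by simp, fun p hp => key hG p ha hau hf hp⟩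
  have h1 := megNumber_le_of_isMEG _ hmeg
  have h2 := Finset.card_insert_le r (S2 G r)
  have h3 := card_S2_le hG r
  omega

lemma part2 [Fintype V] [DecidableEq V] {G : SimpleGraph V} (hG : G.Connected) {v : V}
    (hv : IsCutVertex G v) :
    megNumber G ≤ 3 * cyclomatic G + numLeaves G := by
  by_cases hone : ∀ u : V, u = v
  · -- G has one vertex and hence no edges
    have hmeg : IsMEG G (∅ : Set V) := by
      intro e he
      induction e using Sym2.ind with
      | _ u w =>
        have huw : G.Adj u w := he
        exact absurd ((hone u).trans (hone w).symm) huw.ne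
    have : megNumber G ≤ 0 := Nat.sInf_le ⟨∅, hmeg, Set.ncard_empty _⟩
    omega
  push_neg at hone
  obtain ⟨u0, hu0⟩ := hone
  have hne : Nonempty {u : V | u ≠ v} := ⟨⟨u0, hu0⟩⟩
  rw [IsCutVertex, connected_iff] at hv
  have hpre : ¬ (G.induce {u : V | u ≠ v}).Preconnected := fun hp => hv ⟨hp, hne⟩
  rw [SimpleGraph.Preconnected] at hpre
  push_neg at hpre
  obtain ⟨a0, b0, hab⟩ := hpre
  have hmeg : IsMEG G ↑(S2 G v) := by
    refine isMEG_of hG v _ (le_refl _) ?_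
    intro a ha hau x hx hf
    have hxr : x ≠ v := by
      have h1 : 0 < G.dist a v := hG.pos_dist_of_ne ha
      have h2 := Forced.dist_le' hG hf
      intro h
      rw [h, SimpleGraph.dist_self] at h2
      omega
    by_cases hra : (G.induce {u : V | u ≠ v}).Reachable ⟨x, hxr⟩ a0
    · obtain ⟨y, hyr, hyS, hyreach⟩ := comp_has_S hG v b0.2
      refine ⟨y, hyS, cross_monitor hG hxr hyr ?_ ha hau hf⟩
      intro hxy
      exact hab (hra.symm.trans (hxy.trans hyreach.symm))
    · obtain ⟨y, hyr, hyS, hyreach⟩ := comp_has_S hG v a0.2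
      refine ⟨y, hyS, cross_monitor hG hxr hyr ?_ ha hau hf⟩
      intro hxy
      exact hra (hxy.trans hyreach.symm)
  have h1 := megNumber_le_of_isMEG _ hmeg
  have h3 := card_S2_le hG v
  omega

end Fin

end MEG13


theorem stmt_13 [Fintype V] (G : SimpleGraph V) (hG : G.Connected) :
    megNumber G ≤ 3 * cyclomatic G + numLeaves G + 1 ∧
    ((∃ v : V, IsCutVertex G v) →
      megNumber G ≤ 3 * cyclomatic G + numLeaves G) := by
  classical
  obtain ⟨r⟩ := hG.nonempty
  constructor
  · exact MEG13.part1 hG r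
  · rintro ⟨v, hv⟩
    exact MEG13.part2 hG hv
end

section
/- For any connected graph G, the distance-edge-monitoring number of G is at most c(G) + 1, where c(G) is the cyclomatic number of G. -/
open SimpleGraph

variable {V : Type*}

section AuxDEM

variable {V : Type*}

private lemma step_dist {G : SimpleGraph V} (hG : G.Connected) {u w r : V}
    (hadj : G.Adj u w) (q : G.Walk w r) (hq : q.length + 1 = G.dist u r) :
    G.dist u r = G.dist w r + 1 := by
  have h1 : G.dist w r ≤ q.length := SimpleGraph.dist_le q
  have h2 : G.dist u r ≤ G.dist u w + G.dist w r := hG.dist_triangle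
  have h3 : G.dist u w = 1 := SimpleGraph.dist_eq_one_iff_adj.mpr hadj
  omega

private lemma exists_down {G : SimpleGraph V} (hG : G.Connected) {u r : V} (hur : u ≠ r) :
    ∃ v, G.Adj u v ∧ G.dist u r = G.dist v r + 1 := by
  obtain ⟨p, hp⟩ := (hG u r).exists_walk_length_eq_dist
  cases p with
  | nil => exact absurd rfl hur
  | cons hadj q =>
    exact ⟨_, hadj, step_dist hG hadj q (by simpa using hp)⟩

private lemma monitor_incident {G : SimpleGraph V} {x y : V} (hadj : G.Adj x y) :
    ∀ p : G.Walk x y, p.length = G.dist x y → s(x, y) ∈ p.edges := by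
  intro p hp
  have hd : G.dist x y = 1 := SimpleGraph.dist_eq_one_iff_adj.mpr hadj
  rw [hd] at hp
  cases p with
  | nil => simp at hp
  | cons h q =>
    cases q with
    | nil => simp
    | cons h' q' => simp [SimpleGraph.Walk.length_cons] at hp

private lemma monitor_root_aux {G : SimpleGraph V} (hG : G.Connected) {r u v : V}
    (hur : u ≠ r) (hB : brSet G r u = {s(u, v)}) :
    ∀ q : G.Walk u r, q.length = G.dist u r → s(u, v) ∈ q.edges := by
  intro q hq
  cases q with
  | nil => exact absurd rfl hur
  | cons hadj q' =>
    rename_i w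
    have hstep : G.dist u r = G.dist w r + 1 := step_dist hG hadj q' (by simpa using hq)
    have hmem : s(u, w) ∈ brSet G r u := ⟨w, rfl, hadj, hstep⟩
    rw [hB, Set.mem_singleton_iff] at hmem
    rw [SimpleGraph.Walk.edges_cons, ← hmem]
    exact List.mem_cons_self

private lemma monitor_root {G : SimpleGraph V} (hG : G.Connected) {r u v : V}
    (hur : u ≠ r) (hB : brSet G r u = {s(u, v)}) :
    ∀ p : G.Walk r u, p.length = G.dist r u → s(u, v) ∈ p.edges := by
  intro p hp
  have h := monitor_root_aux hG hur hB p.reverse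
    (by rw [SimpleGraph.Walk.length_reverse, hp, SimpleGraph.dist_comm])
  rwa [SimpleGraph.Walk.edges_reverse, List.mem_reverse] at h

private lemma brSet_disjoint {G : SimpleGraph V} {r u u' : V} {e : Sym2 V}
    (h : e ∈ brSet G r u) (h' : e ∈ brSet G r u') : u = u' := by
  obtain ⟨v, rfl, hadj, hd⟩ := h
  obtain ⟨v', he, hadj', hd'⟩ := h'
  rw [Sym2.eq_iff] at he
  rcases he with ⟨rfl, rfl⟩ | ⟨h1, h2⟩
  · rfl
  · subst h1; subst h2; omega

private lemma brSet_subset_edgeSet {G : SimpleGraph V} {r u : V} {e : Sym2 V}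
    (h : e ∈ brSet G r u) : e ∈ G.edgeSet := by
  obtain ⟨v, rfl, hadj, _⟩ := h
  exact G.mem_edgeSet.mpr hadj

private lemma exists_other_endpoint {G : SimpleGraph V} {e : Sym2 V} (he : e ∈ G.edgeSet)
    {x : V} (hx : x ∈ e) : ∃ y, G.Adj x y ∧ e = s(x, y) := by
  induction e with
  | _ a b =>
    have hadj : G.Adj a b := G.mem_edgeSet.mp he
    rcases Sym2.mem_iff.mp hx with rfl | rfl
    · exact ⟨b, hadj, rfl⟩
    · exact ⟨a, hadj.symm, Sym2.eq_swap⟩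

end AuxDEM

theorem stmt_14 [Fintype V] (G : SimpleGraph V) (hG : G.Connected) :
    demNumber G ≤ cyclomatic G + 1 := by
  classical
  obtain ⟨r⟩ : Nonempty V := hG.nonempty
  -- choose one downward edge at each vertex `u ≠ r`
  have hpick0 : ∀ u : V, ∃ e : Sym2 V, u ≠ r → e ∈ brSet G r u := by
    intro u
    by_cases h : u = r
    · exact ⟨s(r, r), fun h' => absurd h h'⟩
    · obtain ⟨v, hadj, hd⟩ := exists_down hG h
      exact ⟨s(u, v), fun _ => ⟨v, rfl, hadj, hd⟩⟩
  choose pick hpick using hpick0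
  set K : Set (Sym2 V) := pick '' {u | u ≠ r} with hKdef
  have hKsub : K ⊆ G.edgeSet := by
    rintro e ⟨u, hu, rfl⟩
    exact brSet_subset_edgeSet (hpick u hu)
  have hKcard : K.ncard = Fintype.card V - 1 := by
    have hinj : Set.InjOn pick {u : V | u ≠ r} := by
      intro u hu u' hu' h
      exact brSet_disjoint (hpick u hu) (by rw [h]; exact hpick u' hu')
    rw [Set.ncard_image_of_injOn hinj]
    have huniv : {u : V | u ≠ r} = Set.univ \ {r} := by ext; simp
    rw [huniv, Set.ncard_diff (Set.subset_univ _), Set.ncard_univ, Set.ncard_singleton,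
      Nat.card_eq_fintype_card]
  -- the "maximal distance endpoint" function
  have hf0 : ∀ e : Sym2 V, ∃ x : V, x ∈ e ∧ ∀ w ∈ e, G.dist w r ≤ G.dist x r := by
    intro e
    induction e with
    | _ a b =>
      rcases le_total (G.dist a r) (G.dist b r) with h | h
      · exact ⟨b, Sym2.mem_mk_right a b, fun w hw => by
          rcases Sym2.mem_iff.mp hw with rfl | rfl; exacts [h, le_rfl]⟩
      · exact ⟨a, Sym2.mem_mk_left a b, fun w hw => by
          rcases Sym2.mem_iff.mp hw with rfl | rfl; exacts [le_rfl, h]⟩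
  choose f hf1 hf2 using hf0
  have hfup : ∀ u v : V, G.dist u r = G.dist v r + 1 → f s(u, v) = u := by
    intro u v hd
    have h1 := hf1 s(u, v)
    have h2 := hf2 s(u, v) u (Sym2.mem_mk_left u v)
    rcases Sym2.mem_iff.mp h1 with h | h
    · exact h
    · rw [h] at h2; exact absurd h2 (by omega)
  set Bad : Set (Sym2 V) := G.edgeSet \ K with hBadDef
  set S : Set V := insert r (f '' Bad) with hSdef
  -- S is a distance-edge-monitoring set
  have hSdem : IsDEM G S := by
    intro e he
    by_cases heK : e ∈ K
    · obtain ⟨u, hu, hpe⟩ := heK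
      subst hpe
      obtain ⟨v, hev, hadj, hd⟩ := hpick u hu
      by_cases hbig : ∃ e' ∈ brSet G r u, e' ≠ pick u
      · -- u itself is in S, and monitors its incident edge `pick u`
        obtain ⟨e', he'B, he'ne⟩ := hbig
        have he'Bad : e' ∈ Bad := by
          refine ⟨brSet_subset_edgeSet he'B, ?_⟩
          rintro ⟨u', hu', rfl⟩
          exact he'ne (by rw [brSet_disjoint he'B (hpick u' hu')])
        have hfu : f e' = u := by
          obtain ⟨v', rfl, hadj', hd'⟩ := he'B
          exact hfup u v' hd'
        have huS : u ∈ S := Set.mem_insert_of_mem _ ⟨e', he'Bad, hfu⟩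
        refine ⟨u, huS, v, ?_⟩
        rw [hev]
        exact monitor_incident hadj
      · -- `pick u` is the unique downward edge at u: monitored by r
        push_neg at hbig
        have hB : brSet G r u = {s(u, v)} := by
          apply Set.eq_singleton_iff_unique_mem.mpr
          exact ⟨hev ▸ hpick u hu, fun e' he' => by rw [hbig e' he', hev]⟩
        refine ⟨r, Set.mem_insert r _, u, ?_⟩
        rw [hev]
        exact monitor_root hG hu hB
    · -- e is a bad edge: it is monitored by its endpoint `f e ∈ S`
      have heBad : e ∈ Bad := ⟨he, heK⟩
      obtain ⟨x, hxe⟩ : ∃ x, f e = x := ⟨f e, rfl⟩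
      obtain ⟨y, hadj, hey⟩ := exists_other_endpoint he (hxe ▸ hf1 e)
      subst hey
      exact ⟨x, Set.mem_insert_of_mem _ ⟨_, heBad, hxe⟩, y, monitor_incident hadj⟩
  -- cardinality bound
  have hnpos : 0 < Fintype.card V := Fintype.card_pos_iff.mpr ⟨r⟩
  have hmn : Fintype.card V - 1 ≤ G.edgeSet.ncard := by
    rw [← hKcard]
    exact Set.ncard_le_ncard hKsub (Set.toFinite _)
  have hBadcard : Bad.ncard = G.edgeSet.ncard - (Fintype.card V - 1) := by
    rw [hBadDef, Set.ncard_diff hKsub, hKcard]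
  have hScard : S.ncard ≤ cyclomatic G + 1 := by
    calc S.ncard ≤ (f '' Bad).ncard + 1 := Set.ncard_insert_le r _
      _ ≤ Bad.ncard + 1 := by
          exact Nat.add_le_add_right (Set.ncard_image_le (Set.toFinite _)) 1
      _ ≤ cyclomatic G + 1 := by
          rw [hBadcard, cyclomatic]; omega
  calc demNumber G ≤ S.ncard := Nat.sInf_le ⟨S, hSdem, rfl⟩
    _ ≤ cyclomatic G + 1 := hScard
end

section
/- For any connected graph G that is not K₂ (and not a single vertex), |dim(G) − edim(G)| ≤ 2·c(G), where dim is the metric dimension, edim is the edge metric dimension, and c(G) is the cyclomatic number. -/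
open SimpleGraph

variable {V : Type*}

section AuxStmt18

lemma exists_adj_dist (G : SimpleGraph V) (hG : G.Connected) {a b : V} {k : ℕ}
    (h : G.dist a b = k + 1) : ∃ c, G.Adj c b ∧ G.dist a c = k := by
  obtain ⟨p, hp⟩ := (hG a b).exists_walk_length_eq_dist
  have hq : p.reverse.length = k + 1 := by rw [SimpleGraph.Walk.length_reverse, hp, h]
  cases hq' : p.reverse with
  | nil => rw [hq'] at hq; simp at hq
  | cons hadj q =>
    rename_i c
    rw [hq'] at hq
    simp [SimpleGraph.Walk.length_cons] at hq
    refine ⟨c, hadj.symm, ?_⟩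
    have h1 : G.dist a c ≤ k := by
      have := G.dist_le q.reverse
      simpa [hq] using this
    have h2 : G.dist c b = 1 := SimpleGraph.dist_eq_one_iff_adj.mpr hadj.symm
    have h3 : G.dist a b ≤ G.dist a c + G.dist c b := hG.dist_triangle
    omega

open scoped Classical in
/-- Parent of `u` toward the root `r`: a neighbor one level closer to `r`. -/
noncomputable def par (G : SimpleGraph V) (r u : V) : V :=
  if h : ∃ v, G.Adj u v ∧ G.dist r u = G.dist r v + 1 then h.choose else u

lemma par_spec (G : SimpleGraph V) (hG : G.Connected) {r u : V} (hur : u ≠ r) :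
    G.Adj u (par G r u) ∧ G.dist r u = G.dist r (par G r u) + 1 := by
  have hpos : 0 < G.dist r u := hG.pos_dist_of_ne (Ne.symm hur)
  obtain ⟨k, hk⟩ : ∃ k, G.dist r u = k + 1 := ⟨G.dist r u - 1, by omega⟩
  obtain ⟨c, hadj, hd⟩ := exists_adj_dist G hG hk
  have h : ∃ v, G.Adj u v ∧ G.dist r u = G.dist r v + 1 := ⟨c, hadj.symm, by omega⟩
  rw [par, dif_pos h]
  exact h.choose_spec

/-- The set of "dropped" edges: one per vertex `u ≠ r`, namely `s(u, par u)`. -/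
def droppedSet (G : SimpleGraph V) (r : V) : Set (Sym2 V) :=
  {e | ∃ u, u ≠ r ∧ e = s(u, par G r u)}

/-- The good edge set: all edges except dropped ones. -/
def Fset (G : SimpleGraph V) (r : V) : Set (Sym2 V) :=
  G.edgeSet \ droppedSet G r

lemma adj_class (G : SimpleGraph V) {r a b : V}
    (ha : a ∉ endpoints (Fset G r)) (hadj : G.Adj a b) :
    (a ≠ r ∧ b = par G r a) ∨ (b ≠ r ∧ a = par G r b) := by
  have he : s(a, b) ∈ G.edgeSet := hadj
  have hnF : s(a, b) ∉ Fset G r := by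
    intro hF
    exact ha ⟨s(a, b), hF, by simp⟩
  have hd : s(a, b) ∈ droppedSet G r := by
    by_contra hnd
    exact hnF ⟨he, hnd⟩
  obtain ⟨z, hz, hzeq⟩ := hd
  rw [Sym2.eq_iff] at hzeq
  rcases hzeq with ⟨h1, h2⟩ | ⟨h1, h2⟩
  · subst h1; exact Or.inl ⟨hz, h2⟩
  · subst h2; exact Or.inr ⟨hz, h1⟩

lemma Qlemma (G : SimpleGraph V) (hG : G.Connected) {r u x : V}
    (hur : u ≠ r) (hxr : x ≠ r) (hne : u ≠ x)
    (hu : u ∉ endpoints (Fset G r)) (hx : x ∉ endpoints (Fset G r))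
    (hlvl : G.dist r x = G.dist r u)
    (HQu : ∀ z ∈ endpoints (Fset G r), ∀ i, G.dist r z = G.dist r u + (i + 1) →
      G.dist z u = i + 1 → G.dist z x = i + 1)
    (HQx : ∀ z ∈ endpoints (Fset G r), ∀ i, G.dist r z = G.dist r u + (i + 1) →
      G.dist z x = i + 1 → G.dist z u = i + 1) :
    ∀ i z, G.dist r z = G.dist r u + i →
      (G.dist z u = i → z ∉ endpoints (Fset G r)) ∧
      (G.dist z x = i → z ∉ endpoints (Fset G r)) ∧
      ¬(G.dist z u = i ∧ G.dist z x = i) := by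
  intro i
  induction i with
  | zero =>
    intro z _
    refine ⟨?_, ?_, ?_⟩
    · intro h0; rw [hG.dist_eq_zero_iff] at h0; subst h0; exact hu
    · intro h0; rw [hG.dist_eq_zero_iff] at h0; subst h0; exact hx
    · rintro ⟨h1, h2⟩
      rw [hG.dist_eq_zero_iff] at h1 h2
      exact hne (h1 ▸ h2 ▸ rfl)
  | succ i IH =>
    intro z hzl
    -- the core: no z at this level with dist z u = i+1 and dist z x = i+1
    have core : ¬(G.dist z u = i + 1 ∧ G.dist z x = i + 1) := by
      rintro ⟨hzu, hzx⟩
      -- first step toward u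
      obtain ⟨u₁, hadj₁, hd₁⟩ := exists_adj_dist G hG (by rw [G.dist_comm]; exact hzu)
      obtain ⟨x₁, hadj₂, hd₂⟩ := exists_adj_dist G hG (by rw [G.dist_comm]; exact hzx)
      -- levels of u₁ and x₁
      have hlu₁ : G.dist r u₁ = G.dist r u + i := by
        have h1 : G.dist r u₁ ≤ G.dist r u + G.dist u u₁ := hG.dist_triangle
        have h2 : G.dist r z ≤ G.dist r u₁ + G.dist u₁ z := hG.dist_triangle
        have h3 : G.dist u₁ z = 1 := SimpleGraph.dist_eq_one_iff_adj.mpr hadj₁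
        omega
      have hlx₁ : G.dist r x₁ = G.dist r u + i := by
        have h1 : G.dist r x₁ ≤ G.dist r x + G.dist x x₁ := hG.dist_triangle
        have h2 : G.dist r z ≤ G.dist r x₁ + G.dist x₁ z := hG.dist_triangle
        have h3 : G.dist x₁ z = 1 := SimpleGraph.dist_eq_one_iff_adj.mpr hadj₂
        omega
      have hu₁u : G.dist u₁ u = i := by rw [G.dist_comm]; exact hd₁
      have hx₁x : G.dist x₁ x = i := by rw [G.dist_comm]; exact hd₂
      have hu₁nF : u₁ ∉ endpoints (Fset G r) := (IH u₁ hlu₁).1 hu₁u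
      have hx₁nF : x₁ ∉ endpoints (Fset G r) := (IH x₁ hlx₁).2.1 hx₁x
      -- classify the edges (u₁, z) and (x₁, z)
      have hc₁ := adj_class G hu₁nF hadj₁
      have hc₂ := adj_class G hx₁nF hadj₂
      have hzu₁ : u₁ = par G r z := by
        rcases hc₁ with ⟨h1, h2⟩ | ⟨_, h2⟩
        · exfalso
          have := (par_spec G hG h1).2
          rw [← h2] at this
          omega
        · exact h2
      have hzx₁ : x₁ = par G r z := by
        rcases hc₂ with ⟨h1, h2⟩ | ⟨_, h2⟩
        · exfalso
          have := (par_spec G hG h1).2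
          rw [← h2] at this
          omega
        · exact h2
      have heq : u₁ = x₁ := by rw [hzu₁, hzx₁]
      exact (IH u₁ hlu₁).2.2 ⟨hu₁u, heq ▸ hx₁x⟩
    refine ⟨?_, ?_, core⟩
    · intro hzu hzF
      exact core ⟨hzu, HQu z hzF i hzl hzu⟩
    · intro hzx hzF
      exact core ⟨HQx z hzF i hzl hzx, hzx⟩

lemma Slemma (G : SimpleGraph V) (hG : G.Connected) {r y : V} (hyr : y ≠ r)
    (Hdesc : ∀ i z, G.dist r z = G.dist r y + i → G.dist z y = i →
      z ∉ endpoints (Fset G r)) :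
    ∀ k i z w, G.dist r z = G.dist r y + i → G.dist z y = i → G.dist w z = k →
      k ≤ G.dist w (par G r z) → G.dist r w = G.dist r y + i + k := by
  intro k
  induction k with
  | zero =>
    intro i z w hzl _ hwz _
    rw [hG.dist_eq_zero_iff] at hwz
    subst hwz
    omega
  | succ k IH =>
    intro i z w hzl hzy hwz hwp
    have hzr : z ≠ r := by
      intro hzeq
      rw [hzeq] at hzl
      have h0 : G.dist r r = 0 := by simp
      have hpos : 0 < G.dist r y := hG.pos_dist_of_ne (Ne.symm hyr)
      omega
    have hznF : z ∉ endpoints (Fset G r) := Hdesc i z hzl hzy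
    obtain ⟨c, hadjc, hwc⟩ := exists_adj_dist G hG hwz
    have hc := adj_class G hznF hadjc.symm
    rcases hc with ⟨_, h2⟩ | ⟨h1, h2⟩
    · -- c = par z : contradiction with hwp
      exfalso
      rw [← h2] at hwp
      omega
    · -- z = par c
      have hspec := (par_spec G hG h1).2
      rw [← h2] at hspec
      have hcl : G.dist r c = G.dist r y + (i + 1) := by omega
      have hcy : G.dist c y = i + 1 := by
        have hup : G.dist c y ≤ G.dist c z + G.dist z y := hG.dist_triangle
        have hcz : G.dist c z = 1 := SimpleGraph.dist_eq_one_iff_adj.mpr hadjc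
        have hlow : G.dist r c ≤ G.dist r y + G.dist y c := hG.dist_triangle
        have hcomm : G.dist y c = G.dist c y := G.dist_comm
        omega
      have hwpc : k ≤ G.dist w (par G r c) := by rw [← h2]; omega
      exact (by omega : G.dist r y + (i+1) + k = G.dist r y + i + (k+1)) ▸
        IH (i+1) c w hcl hcy hwc hwpc

lemma starA_core (G : SimpleGraph V) (hG : G.Connected) {r u x w : V}
    (hur : u ≠ r) (hxr : x ≠ r) (hne : u ≠ x)
    (hu : u ∉ endpoints (Fset G r)) (hx : x ∉ endpoints (Fset G r))
    (hlvl : G.dist r x = G.dist r u)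
    (Hcode : ∀ t ∈ endpoints (Fset G r),
      min (G.dist t u) (G.dist t (par G r u)) = min (G.dist t x) (G.dist t (par G r x)))
    (hw : min (G.dist w u) (G.dist w (par G r u))
        = min (G.dist w x) (G.dist w (par G r x)))
    (hlt : G.dist w u < G.dist w x) : False := by
  obtain ⟨hadju, hspu⟩ := par_spec G hG hur
  obtain ⟨hadjx, hspx⟩ := par_spec G hG hxr
  -- derive the Q hypotheses from Hcode
  have HQu : ∀ z ∈ endpoints (Fset G r), ∀ i, G.dist r z = G.dist r u + (i + 1) →
      G.dist z u = i + 1 → G.dist z x = i + 1 := by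
    intro z hz i hzl hzu
    have hcode := Hcode z hz
    have h1 : G.dist r z ≤ G.dist r (par G r u) + G.dist (par G r u) z := hG.dist_triangle
    have h1' : G.dist (par G r u) z = G.dist z (par G r u) := G.dist_comm
    have h2 : G.dist r z ≤ G.dist r (par G r x) + G.dist (par G r x) z := hG.dist_triangle
    have h2' : G.dist (par G r x) z = G.dist z (par G r x) := G.dist_comm
    have hm1 := min_choice (G.dist z u) (G.dist z (par G r u))
    have hm1' := min_le_right (G.dist z u) (G.dist z (par G r u))
    have hm1'' := min_le_left (G.dist z u) (G.dist z (par G r u))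
    have hm2 := min_choice (G.dist z x) (G.dist z (par G r x))
    have hm2' := min_le_right (G.dist z x) (G.dist z (par G r x))
    have hm2'' := min_le_left (G.dist z x) (G.dist z (par G r x))
    omega
  have HQx : ∀ z ∈ endpoints (Fset G r), ∀ i, G.dist r z = G.dist r u + (i + 1) →
      G.dist z x = i + 1 → G.dist z u = i + 1 := by
    intro z hz i hzl hzx
    have hcode := Hcode z hz
    have h1 : G.dist r z ≤ G.dist r (par G r u) + G.dist (par G r u) z := hG.dist_triangle
    have h1' : G.dist (par G r u) z = G.dist z (par G r u) := G.dist_comm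
    have h2 : G.dist r z ≤ G.dist r (par G r x) + G.dist (par G r x) z := hG.dist_triangle
    have h2' : G.dist (par G r x) z = G.dist z (par G r x) := G.dist_comm
    have hm1 := min_choice (G.dist z u) (G.dist z (par G r u))
    have hm1' := min_le_right (G.dist z u) (G.dist z (par G r u))
    have hm1'' := min_le_left (G.dist z u) (G.dist z (par G r u))
    have hm2 := min_choice (G.dist z x) (G.dist z (par G r x))
    have hm2' := min_le_right (G.dist z x) (G.dist z (par G r x))
    have hm2'' := min_le_left (G.dist z x) (G.dist z (par G r x))
    omega
  have Q := Qlemma G hG hur hxr hne hu hx hlvl HQu HQx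
  -- arithmetic on the codes at w
  have ht1 : G.dist w u ≤ G.dist w (par G r u) + G.dist (par G r u) u := hG.dist_triangle
  have ht1' : G.dist (par G r u) u = 1 := SimpleGraph.dist_eq_one_iff_adj.mpr hadju.symm
  have ht2 : G.dist w x ≤ G.dist w (par G r x) + G.dist (par G r x) x := hG.dist_triangle
  have ht2' : G.dist (par G r x) x = 1 := SimpleGraph.dist_eq_one_iff_adj.mpr hadjx.symm
  have hm1 := min_choice (G.dist w u) (G.dist w (par G r u))
  have hm1' := min_le_right (G.dist w u) (G.dist w (par G r u))
  have hm1'' := min_le_left (G.dist w u) (G.dist w (par G r u))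
  have hm2 := min_choice (G.dist w x) (G.dist w (par G r x))
  have hm2' := min_le_right (G.dist w x) (G.dist w (par G r x))
  have hm2'' := min_le_left (G.dist w x) (G.dist w (par G r x))
  have hcu : min (G.dist w u) (G.dist w (par G r u)) = G.dist w u := by omega
  have hpx : G.dist w (par G r x) = G.dist w u := by omega
  have hpu : G.dist w u ≤ G.dist w (par G r u) := by omega
  -- apply the descent lemma with y := u, z := u, i := 0, k := dist w u
  have hS := Slemma G hG hur (fun i z hzl hzy => (Q i z hzl).1 hzy)
    (G.dist w u) 0 u w (by omega) (by simp) (by rw [G.dist_comm]) hpu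
  -- level contradiction
  have hfin : G.dist r w ≤ G.dist r (par G r x) + G.dist (par G r x) w := hG.dist_triangle
  have hfin' : G.dist (par G r x) w = G.dist w (par G r x) := G.dist_comm
  omega

lemma starB_core (G : SimpleGraph V) (hG : G.Connected) {r u x w : V}
    (hur : u ≠ r) (hxr : x ≠ r) (hne : u ≠ x)
    (hu : u ∉ endpoints (Fset G r)) (hx : x ∉ endpoints (Fset G r))
    (hlvl : G.dist r x = G.dist r u)
    (Hdist : ∀ t ∈ endpoints (Fset G r), G.dist t u = G.dist t x)
    (hw : G.dist w u = G.dist w x)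
    (hmin : min (G.dist w u) (G.dist w (par G r u))
        ≠ min (G.dist w x) (G.dist w (par G r x)))
    (hlt : G.dist w (par G r u) < G.dist w (par G r x)) : False := by
  obtain ⟨hadju, hspu⟩ := par_spec G hG hur
  obtain ⟨hadjx, hspx⟩ := par_spec G hG hxr
  have HQu : ∀ z ∈ endpoints (Fset G r), ∀ i, G.dist r z = G.dist r u + (i + 1) →
      G.dist z u = i + 1 → G.dist z x = i + 1 := by
    intro z hz i _ hzu
    rw [← Hdist z hz]; exact hzu
  have HQx : ∀ z ∈ endpoints (Fset G r), ∀ i, G.dist r z = G.dist r u + (i + 1) →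
      G.dist z x = i + 1 → G.dist z u = i + 1 := by
    intro z hz i _ hzx
    rw [Hdist z hz]; exact hzx
  have Q := Qlemma G hG hur hxr hne hu hx hlvl HQu HQx
  have ht1 : G.dist w u ≤ G.dist w (par G r u) + G.dist (par G r u) u := hG.dist_triangle
  have ht1' : G.dist (par G r u) u = 1 := SimpleGraph.dist_eq_one_iff_adj.mpr hadju.symm
  have hm1 := min_choice (G.dist w u) (G.dist w (par G r u))
  have hm1' := min_le_right (G.dist w u) (G.dist w (par G r u))
  have hm1'' := min_le_left (G.dist w u) (G.dist w (par G r u))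
  have hm2 := min_choice (G.dist w x) (G.dist w (par G r x))
  have hm2' := min_le_right (G.dist w x) (G.dist w (par G r x))
  have hm2'' := min_le_left (G.dist w x) (G.dist w (par G r x))
  have hpx : G.dist w x ≤ G.dist w (par G r x) := by omega
  have Hdescx : ∀ i z, G.dist r z = G.dist r x + i → G.dist z x = i →
      z ∉ endpoints (Fset G r) := by
    intro i z hzl hzx
    exact (Q i z (by omega)).2.1 hzx
  have hS := Slemma G hG hxr Hdescx
    (G.dist w x) 0 x w (by omega) (by simp) (by rw [G.dist_comm]) hpx
  have hfin : G.dist r w ≤ G.dist r (par G r u) + G.dist (par G r u) w := hG.dist_triangle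
  have hfin' : G.dist (par G r u) w = G.dist w (par G r u) := G.dist_comm
  omega

lemma starA (G : SimpleGraph V) (hG : G.Connected) {r u x w : V}
    (hur : u ≠ r) (hxr : x ≠ r) (hne : u ≠ x)
    (hu : u ∉ endpoints (Fset G r)) (hx : x ∉ endpoints (Fset G r))
    (hlvl : G.dist r x = G.dist r u)
    (Hcode : ∀ t ∈ endpoints (Fset G r),
      min (G.dist t u) (G.dist t (par G r u)) = min (G.dist t x) (G.dist t (par G r x)))
    (hw : min (G.dist w u) (G.dist w (par G r u))
        = min (G.dist w x) (G.dist w (par G r x))) :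
    G.dist w u = G.dist w x := by
  by_contra hne'
  rcases Nat.lt_or_ge (G.dist w u) (G.dist w x) with h | h
  · exact starA_core G hG hur hxr hne hu hx hlvl Hcode hw h
  · have h' : G.dist w x < G.dist w u := by omega
    exact starA_core G hG hxr hur (Ne.symm hne) hx hu (by omega)
      (fun t ht => (Hcode t ht).symm) hw.symm h'

lemma starB (G : SimpleGraph V) (hG : G.Connected) {r u x w : V}
    (hur : u ≠ r) (hxr : x ≠ r) (hne : u ≠ x)
    (hu : u ∉ endpoints (Fset G r)) (hx : x ∉ endpoints (Fset G r))
    (hlvl : G.dist r x = G.dist r u)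
    (Hdist : ∀ t ∈ endpoints (Fset G r), G.dist t u = G.dist t x)
    (hw : G.dist w u = G.dist w x) :
    min (G.dist w u) (G.dist w (par G r u))
      = min (G.dist w x) (G.dist w (par G r x)) := by
  by_contra hmin
  rcases Nat.lt_trichotomy (G.dist w (par G r u)) (G.dist w (par G r x)) with h | h | h
  · exact starB_core G hG hur hxr hne hu hx hlvl Hdist hw hmin h
  · rw [hw, h] at hmin; exact hmin rfl
  · exact starB_core G hG hxr hur (Ne.symm hne) hx hu (by omega)
      (fun t ht => (Hdist t ht).symm) hw.symm (Ne.symm hmin) h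

lemma edgeDist_mk (G : SimpleGraph V) (v a b : V) :
    edgeDist G v s(a, b) = min (G.dist v a) (G.dist v b) := rfl

lemma edgeDist_zero_of_mem (G : SimpleGraph V) {a : V} {e : Sym2 V} (ha : a ∈ e) :
    edgeDist G a e = 0 := by
  induction e with
  | _ b c =>
    rw [Sym2.mem_iff] at ha
    rcases ha with rfl | rfl
    · simp [edgeDist_mk]
    · simp [edgeDist_mk]

lemma mem_of_edgeDist_zero (G : SimpleGraph V) (hG : G.Connected) {a : V} {e : Sym2 V}
    (h : edgeDist G a e = 0) : a ∈ e := by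
  induction e with
  | _ b c =>
    rw [edgeDist_mk] at h
    rw [Sym2.mem_iff]
    rcases Nat.min_eq_zero_iff.mp h with h0 | h0 <;>
      [left; right] <;> exact (hG.dist_eq_zero_iff.mp h0)

lemma sym2_eq_of_subset (G : SimpleGraph V) {e f : Sym2 V}
    (he : e ∈ G.edgeSet) (hf : f ∈ G.edgeSet) (hsub : ∀ a ∈ e, a ∈ f) : e = f := by
  induction e with
  | _ a b =>
    induction f with
    | _ c d =>
      have hab : a ≠ b := (G.mem_edgeSet.mp he).ne
      have ha := hsub a (by simp)
      have hb := hsub b (Sym2.mem_mk_right a b)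
      rw [Sym2.mem_iff] at ha hb
      rw [Sym2.eq_iff]
      rcases ha with rfl | rfl <;> rcases hb with rfl | rfl <;> tauto

lemma glueA (G : SimpleGraph V) (hG : G.Connected) {S : Set V} {r : V}
    (hres : IsResolving G S) (hr : r ∈ S) :
    IsEdgeResolving G (S ∪ endpoints (Fset G r)) := by
  intro e he f hf hef
  by_contra hcon
  push_neg at hcon
  -- e and f are dropped edges
  have heF : e ∉ Fset G r := by
    intro heF
    refine hef (sym2_eq_of_subset G he hf ?_)
    intro a hae
    have haep : a ∈ S ∪ endpoints (Fset G r) := Or.inr ⟨e, heF, hae⟩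
    have h0 : edgeDist G a f = 0 := by
      rw [← hcon a haep]; exact edgeDist_zero_of_mem G hae
    exact mem_of_edgeDist_zero G hG h0
  have hfF : f ∉ Fset G r := by
    intro hfF
    refine hef (sym2_eq_of_subset G hf he ?_).symm
    intro a haf
    have haep : a ∈ S ∪ endpoints (Fset G r) := Or.inr ⟨f, hfF, haf⟩
    have h0 : edgeDist G a e = 0 := by
      rw [hcon a haep]; exact edgeDist_zero_of_mem G haf
    exact mem_of_edgeDist_zero G hG h0
  obtain ⟨u, hur, rfl⟩ : e ∈ droppedSet G r := by
    by_contra hnd; exact heF ⟨he, hnd⟩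
  obtain ⟨x, hxr, rfl⟩ : f ∈ droppedSet G r := by
    by_contra hnd; exact hfF ⟨hf, hnd⟩
  obtain ⟨hadju, hspu⟩ := par_spec G hG hur
  obtain ⟨hadjx, hspx⟩ := par_spec G hG hxr
  have hne : u ≠ x := by rintro rfl; exact hef rfl
  simp only [edgeDist_mk] at hcon
  -- levels are equal
  have hlvl : G.dist r x = G.dist r u := by
    have h := hcon r (Or.inl hr)
    have hm1 := min_choice (G.dist r u) (G.dist r (par G r u))
    have hm1' := min_le_right (G.dist r u) (G.dist r (par G r u))
    have hm2 := min_choice (G.dist r x) (G.dist r (par G r x))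
    have hm2' := min_le_right (G.dist r x) (G.dist r (par G r x))
    omega
  -- u and x are not endpoints of F
  have hu : u ∉ endpoints (Fset G r) := by
    intro huF
    have h := hcon u (Or.inr huF)
    have h0 : min (G.dist u u) (G.dist u (par G r u)) = 0 := by
      simp [SimpleGraph.dist_self]
    rw [h0] at h
    have hmem : u ∈ s(x, par G r x) :=
      mem_of_edgeDist_zero G hG (by rw [edgeDist_mk]; omega)
    rw [Sym2.mem_iff] at hmem
    rcases hmem with rfl | rfl
    · exact hne rfl
    · omega
  have hx : x ∉ endpoints (Fset G r) := by
    intro hxF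
    have h := hcon x (Or.inr hxF)
    have h0 : min (G.dist x x) (G.dist x (par G r x)) = 0 := by
      simp [SimpleGraph.dist_self]
    rw [h0] at h
    have hmem : x ∈ s(u, par G r u) :=
      mem_of_edgeDist_zero G hG (by rw [edgeDist_mk]; omega)
    rw [Sym2.mem_iff] at hmem
    rcases hmem with rfl | rfl
    · exact hne rfl
    · omega
  obtain ⟨s, hs, hsne⟩ := hres u x hne
  exact hsne (starA G hG hur hxr hne hu hx hlvl
    (fun t ht => hcon t (Or.inr ht)) (hcon s (Or.inl hs)))

lemma glueB (G : SimpleGraph V) (hG : G.Connected) {S : Set V} {r : V}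
    (hres : IsEdgeResolving G S) (hr : r ∈ S) :
    IsResolving G (S ∪ endpoints (Fset G r)) := by
  intro u x hne
  by_contra hcon
  push_neg at hcon
  have har : u ≠ r := by
    intro heq
    have h := hcon r (Or.inl hr)
    rw [← heq, SimpleGraph.dist_self] at h
    exact hne (hG.dist_eq_zero_iff.mp h.symm)
  have hbr : x ≠ r := by
    intro heq
    have h := hcon r (Or.inl hr)
    rw [← heq, SimpleGraph.dist_self] at h
    exact hne (hG.dist_eq_zero_iff.mp h).symm
  have hlvl : G.dist r x = G.dist r u := (hcon r (Or.inl hr)).symm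
  have hu : u ∉ endpoints (Fset G r) := by
    intro huF
    have h := hcon u (Or.inr huF)
    rw [SimpleGraph.dist_self] at h
    exact hne (hG.dist_eq_zero_iff.mp h.symm)
  have hx : x ∉ endpoints (Fset G r) := by
    intro hxF
    have h := hcon x (Or.inr hxF)
    rw [SimpleGraph.dist_self] at h
    exact hne (hG.dist_eq_zero_iff.mp h).symm
  obtain ⟨hadju, hspu⟩ := par_spec G hG har
  obtain ⟨hadjx, hspx⟩ := par_spec G hG hbr
  have hee : s(u, par G r u) ≠ s(x, par G r x) := by
    intro h
    rw [Sym2.eq_iff] at h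
    rcases h with ⟨rfl, -⟩ | ⟨h1, h2⟩
    · exact hne rfl
    · rw [← h1] at hspx
      rw [h2] at hspu
      omega
  obtain ⟨s, hs, hsne⟩ := hres s(u, par G r u) hadju s(x, par G r x) hadjx hee
  rw [edgeDist_mk, edgeDist_mk] at hsne
  exact hsne (starB G hG har hbr hne hu hx hlvl
    (fun t ht => hcon t (Or.inr ht)) (hcon s (Or.inl hs)))

lemma endpoints_empty : endpoints (∅ : Set (Sym2 V)) = ∅ := by
  ext v; simp [endpoints]

lemma endpoints_insert (e : Sym2 V) (F : Set (Sym2 V)) :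
    endpoints (insert e F) = {v | v ∈ e} ∪ endpoints F := by
  ext v
  simp only [endpoints, Set.mem_insert_iff, Set.mem_union, Set.mem_setOf_eq]
  constructor
  · rintro ⟨g, (rfl | hg), hv⟩
    · exact Or.inl hv
    · exact Or.inr ⟨g, hg, hv⟩
  · rintro (hv | ⟨g, hg, hv⟩)
    · exact ⟨e, Or.inl rfl, hv⟩
    · exact ⟨g, Or.inr hg, hv⟩

lemma mem_sym2_ncard_le (e : Sym2 V) : {v | v ∈ e}.ncard ≤ 2 := by
  induction e with
  | _ a b =>
    have : {v | v ∈ s(a, b)} = {a, b} := by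
      ext v; simp [Sym2.mem_iff]
    rw [this]
    have h1 := Set.ncard_insert_le a ({b} : Set V)
    simpa using h1

lemma endpoints_ncard_le [Fintype V] (F : Set (Sym2 V)) :
    (endpoints F).ncard ≤ 2 * F.ncard := by
  classical
  refine Set.Finite.induction_on (motive := fun F _ => (endpoints F).ncard ≤ 2 * F.ncard) F (Set.toFinite F) (by simp [endpoints_empty]) ?_
  intro e F' heF' hF' IH
  rw [endpoints_insert]
  have h1 := Set.ncard_union_le {v | v ∈ e} (endpoints F')
  have h2 := mem_sym2_ncard_le e
  have h3 : (insert e F').ncard = F'.ncard + 1 :=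
    Set.ncard_insert_of_notMem heF'
  omega

lemma dropped_subset_edgeSet (G : SimpleGraph V) (hG : G.Connected) (r : V) :
    droppedSet G r ⊆ G.edgeSet := by
  rintro e ⟨u, hur, rfl⟩
  exact (par_spec G hG hur).1

lemma dropped_ncard [Fintype V] (G : SimpleGraph V) (hG : G.Connected) (r : V) :
    (droppedSet G r).ncard = Fintype.card V - 1 := by
  classical
  have himg : droppedSet G r = (fun u => s(u, par G r u)) '' {u | u ≠ r} := by
    ext e
    simp only [droppedSet, Set.mem_image, Set.mem_setOf_eq]
    constructor
    · rintro ⟨u, h1, h2⟩; exact ⟨u, h1, h2.symm⟩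
    · rintro ⟨u, h1, h2⟩; exact ⟨u, h1, h2.symm⟩
  rw [himg, Set.ncard_image_of_injOn ?_]
  · have : {u : V | u ≠ r} = Set.univ \ {r} := by ext; simp
    rw [this, Set.ncard_diff (by simp), Set.ncard_univ, Set.ncard_singleton,
      Nat.card_eq_fintype_card]
  · intro a ha b hb hab
    have hsa := (par_spec G hG ha).2
    have hsb := (par_spec G hG hb).2
    rw [Sym2.eq_iff] at hab
    rcases hab with ⟨h1, -⟩ | ⟨h1, h2⟩
    · exact h1
    · rw [← h1] at hsb
      rw [h2] at hsa
      omega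

lemma Fset_ncard [Fintype V] (G : SimpleGraph V) (hG : G.Connected) (r : V) :
    (Fset G r).ncard = G.edgeSet.ncard - (Fintype.card V - 1) := by
  classical
  rw [Fset, Set.ncard_diff (dropped_subset_edgeSet G hG r), dropped_ncard G hG r]

lemma card_le_edge [Fintype V] (G : SimpleGraph V) (hG : G.Connected) (r : V) :
    Fintype.card V - 1 ≤ G.edgeSet.ncard := by
  rw [← dropped_ncard G hG r]
  exact Set.ncard_le_ncard (dropped_subset_edgeSet G hG r) (Set.toFinite _)

end AuxStmt18

theorem stmt_18 [Fintype V] (G : SimpleGraph V) (hG : G.Connected)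
    (h3 : 3 ≤ Fintype.card V) :
    |(metricDim G : ℤ) - (edgeMetricDim G : ℤ)| ≤ 2 * cyclomatic G := by
  classical
  have hV : Nonempty V := Fintype.card_pos_iff.mp (by omega)
  obtain ⟨a₀, b₀, hab₀⟩ := Fintype.exists_pair_of_one_lt_card (by omega : 1 < Fintype.card V)
  -- universal resolving sets
  have huniv_res : IsResolving G Set.univ := by
    intro y z hyz
    refine ⟨y, trivial, ?_⟩
    rw [SimpleGraph.dist_self]
    exact fun h => hyz (hG.dist_eq_zero_iff.mp h.symm)
  have huniv_eres : IsEdgeResolving G Set.univ := by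
    intro e he f hf hef
    have : ¬ ∀ a ∈ e, a ∈ f := fun h => hef (sym2_eq_of_subset G he hf h)
    push_neg at this
    obtain ⟨a, hae, haf⟩ := this
    refine ⟨a, trivial, ?_⟩
    rw [edgeDist_zero_of_mem G hae]
    exact fun h => haf (mem_of_edgeDist_zero G hG h.symm)
  have hMne : {k | ∃ S : Set V, IsResolving G S ∧ S.ncard = k}.Nonempty :=
    ⟨(Set.univ : Set V).ncard, Set.univ, huniv_res, rfl⟩
  have hEne : {k | ∃ S : Set V, IsEdgeResolving G S ∧ S.ncard = k}.Nonempty :=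
    ⟨(Set.univ : Set V).ncard, Set.univ, huniv_eres, rfl⟩
  obtain ⟨S₁, hS₁res, hS₁card⟩ := Nat.sInf_mem hMne
  obtain ⟨S₂, hS₂res, hS₂card⟩ := Nat.sInf_mem hEne
  have hS₁ne : S₁.Nonempty := by
    rcases Set.eq_empty_or_nonempty S₁ with h | h
    · obtain ⟨s, hs, -⟩ := hS₁res a₀ b₀ hab₀
      rw [h] at hs
      exact absurd hs (Set.notMem_empty s)
    · exact h
  have hS₂ne : S₂.Nonempty := by
    rcases Set.eq_empty_or_nonempty S₂ with h | h
    · exfalso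
      have h2 : 1 < (droppedSet G (Classical.arbitrary V)).ncard := by
        rw [dropped_ncard G hG]; omega
      rw [Set.one_lt_ncard_iff (Set.toFinite _)] at h2
      obtain ⟨e, f, he, hf, hef⟩ := h2
      obtain ⟨s, hs, -⟩ := hS₂res e (dropped_subset_edgeSet G hG _ he)
        f (dropped_subset_edgeSet G hG _ hf) hef
      rw [h] at hs
      exact absurd hs (Set.notMem_empty s)
    · exact h
  obtain ⟨r₁, hr₁⟩ := hS₁ne
  obtain ⟨r₂, hr₂⟩ := hS₂ne
  -- key cardinality facts
  have hm : Fintype.card V - 1 ≤ G.edgeSet.ncard := card_le_edge G hG r₁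
  have hF1 : (Fset G r₁).ncard = G.edgeSet.ncard - (Fintype.card V - 1) :=
    Fset_ncard G hG r₁
  have hF2 : (Fset G r₂).ncard = G.edgeSet.ncard - (Fintype.card V - 1) :=
    Fset_ncard G hG r₂
  have hcyc : cyclomatic G = G.edgeSet.ncard - (Fintype.card V - 1) := by
    rw [cyclomatic]; omega
  have hmdef : metricDim G = sInf {k | ∃ S : Set V, IsResolving G S ∧ S.ncard = k} := rfl
  have hedef : edgeMetricDim G = sInf {k | ∃ S : Set V, IsEdgeResolving G S ∧ S.ncard = k} := rfl
  rw [← hmdef] at hS₁card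
  rw [← hedef] at hS₂card
  -- edim ≤ dim + 2c
  have hEdim : edgeMetricDim G ≤ metricDim G + 2 * cyclomatic G := by
    have hres := glueA G hG hS₁res hr₁
    have hle : edgeMetricDim G ≤ (S₁ ∪ endpoints (Fset G r₁)).ncard :=
      Nat.sInf_le ⟨S₁ ∪ endpoints (Fset G r₁), hres, rfl⟩
    have h1 := Set.ncard_union_le S₁ (endpoints (Fset G r₁))
    have h2 := endpoints_ncard_le (Fset G r₁)
    omega
  -- dim ≤ edim + 2c
  have hDim : metricDim G ≤ edgeMetricDim G + 2 * cyclomatic G := by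
    have hres := glueB G hG hS₂res hr₂
    have hle : metricDim G ≤ (S₂ ∪ endpoints (Fset G r₂)).ncard :=
      Nat.sInf_le ⟨S₂ ∪ endpoints (Fset G r₂), hres, rfl⟩
    have h1 := Set.ncard_union_le S₂ (endpoints (Fset G r₂))
    have h2 := endpoints_ncard_le (Fset G r₂)
    omega
  rw [abs_le]
  constructor <;> push_cast <;> omega
end
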